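/- arXiv:1903.01162 — 2 statements merged into one kernel-verified Lean document; each statement's English description precedes it below -/
import Mathlib

section
/- For any vector x in R^N, the ℓ0 norm of x (the number of nonzero components) equals the minimum of the ℓ1 norm of u over all u in R^N with -1 ≤ u_i ≤ 1 for all i, subject to the constraint that the ℓ1 norm of x equals the inner product ⟨u, x⟩. -/
open Finset

theorem l0_as_min (N : ℕ) (x : Fin N → ℝ) :
    IsLeast { r : ℝ | ∃ u : Fin N → ℝ,
        (∀ i, -1 ≤ u i ∧ u i ≤ 1) ∧
        (∑ i, |x i|) = ∑ i, u i * x i ∧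
        r = ∑ i, |u i| }
      ((Finset.univ.filter (fun i => x i ≠ 0)).card : ℝ) := by
  constructor
  · -- membership: take u = sign x
    refine ⟨fun i => Real.sign (x i), ?_, ?_, ?_⟩
    · intro i
      dsimp only
      rcases Real.sign_apply_eq (x i) with h | h | h <;> rw [h] <;> norm_num
    · refine Finset.sum_congr rfl fun i _ => ?_
      dsimp only
      rcases lt_trichotomy (x i) 0 with h | h | h
      · rw [Real.sign_of_neg h, abs_of_neg h]; ring
      · simp [h]
      · rw [Real.sign_of_pos h, abs_of_pos h]; ring
    · rw [Finset.card_eq_sum_ones, Nat.cast_sum]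
      rw [← Finset.sum_filter_add_sum_filter_not Finset.univ (fun i => x i ≠ 0)
        (fun i => |Real.sign (x i)|)]
      have h1 : ∑ i ∈ Finset.univ.filter (fun i => ¬ x i ≠ 0),
          |Real.sign (x i)| = 0 := by
        refine Finset.sum_eq_zero fun i hi => ?_
        simp only [Finset.mem_filter, not_not] at hi
        simp [hi.2]
      rw [h1, add_zero]
      refine (Finset.sum_congr rfl fun i hi => ?_).symm
      simp only [Finset.mem_filter] at hi
      rcases lt_trichotomy (x i) 0 with h | h | h
      · rw [Real.sign_of_neg h]; norm_num
      · exact absurd h hi.2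
      · rw [Real.sign_of_pos h]; norm_num
  · -- lower bound
    rintro r ⟨u, hbd, hsum, rfl⟩
    have hterm : ∀ i ∈ Finset.univ, |x i| - u i * x i = 0 := by
      have hnn : ∀ i ∈ Finset.univ, 0 ≤ |x i| - u i * x i := by
        intro i _
        have : u i * x i ≤ |x i| := by
          calc u i * x i ≤ |u i * x i| := le_abs_self _
            _ = |u i| * |x i| := abs_mul _ _
            _ ≤ 1 * |x i| := by
                apply mul_le_mul_of_nonneg_right _ (abs_nonneg _)
                exact abs_le.mpr ⟨(hbd i).1, (hbd i).2⟩
            _ = |x i| := one_mul _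
        linarith
      have hz : ∑ i, (|x i| - u i * x i) = 0 := by
        rw [Finset.sum_sub_distrib, hsum, sub_self]
      exact fun i hi => le_antisymm (by
        have := Finset.single_le_sum hnn hi
        linarith) (hnn i hi) |>.symm ▸ (Finset.sum_eq_zero_iff_of_nonneg hnn).mp hz i hi
    have hone : ∀ i ∈ Finset.univ.filter (fun i => x i ≠ 0), (1:ℝ) ≤ |u i| := by
      intro i hi
      simp only [Finset.mem_filter] at hi
      have h := hterm i (Finset.mem_univ i)
      have hx : 0 < |x i| := abs_pos.mpr hi.2
      have : |u i| * |x i| ≥ |x i| := by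
        calc |u i| * |x i| = |u i * x i| := (abs_mul _ _).symm
          _ ≥ u i * x i := le_abs_self _
          _ = |x i| := by linarith
      nlinarith
    calc ((Finset.univ.filter (fun i => x i ≠ 0)).card : ℝ)
        = ∑ i ∈ Finset.univ.filter (fun i => x i ≠ 0), (1:ℝ) := by simp
      _ ≤ ∑ i ∈ Finset.univ.filter (fun i => x i ≠ 0), |u i| :=
          Finset.sum_le_sum hone
      _ ≤ ∑ i, |u i| := Finset.sum_le_sum_of_subset_of_nonneg
          (Finset.filter_subset _ _) (fun i _ _ => abs_nonneg _)
end

section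
/- Let A ∈ R^{M×N}, d ∈ R^M, and w ∈ R^N nonnegative. Let x̂ be a minimizer over the nonnegative orthant of f(x) = (1/2)‖Ax - d‖² + ⟨w, |x|⟩. If for some index i we have w_i > σ(A)·‖d‖, where σ(A) is the largest singular value of A, then x̂_i = 0. -/
/-!
If `x̂ i > 0`, moving `x̂` by `-t` in coordinate `i` (`0 < t ≤ x̂ i`) stays in the orthant and
changes the objective by `-t (w i + ⟪A x̂ - d, A e_i⟫) + t² ‖A e_i‖² / 2`, so minimality forces
`w i ≤ ⟪d - A x̂, A e_i⟫`. Comparing with `x = 0` gives `‖A x̂ - d‖ ≤ ‖d‖`, and `‖A e_i‖ ≤ σ(A)`,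
so Cauchy–Schwarz yields `w i ≤ σ(A) ‖d‖`.
-/

/-- Euclidean norm of a vector. -/
noncomputable def l2norm {m : Type*} [Fintype m] (v : m → ℝ) : ℝ :=
  Real.sqrt (∑ i, (v i) ^ 2)

/-- The spectral norm (largest singular value) of a real matrix. -/
noncomputable def specNorm {m n : Type*} [Fintype m] [Fintype n] [DecidableEq n]
    (A : Matrix m n ℝ) : ℝ :=
  ‖LinearMap.toContinuousLinearMap (Matrix.toEuclideanLin A)‖

open Filter Topology Matrix

theorem nonpos_of_forall_le_mul {c q ε : ℝ} (hε : 0 < ε)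
    (h : ∀ t, 0 < t → t ≤ ε → c ≤ t * q) : c ≤ 0 := by
  have hlim : Tendsto (fun t => t * q) (𝓝[>] 0) (𝓝 0) := by
    simpa using ((tendsto_id (x := 𝓝 (0 : ℝ))).mul_const q).mono_left nhdsWithin_le_nhds
  refine ge_of_tendsto hlim ?_
  filter_upwards [Ioc_mem_nhdsGT hε] with t ht using h t ht.1 ht.2

section l2norm

variable {m : Type*} [Fintype m]

theorem l2norm_neg (v : m → ℝ) : l2norm (-v) = l2norm v := by
  simp [l2norm]

theorem sum_mul_le_l2norm_mul_l2norm (u v : m → ℝ) : ∑ k, u k * v k ≤ l2norm u * l2norm v :=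
  Real.sum_mul_le_sqrt_mul_sqrt _ u v

theorem l2norm_eq_norm_toLp (v : m → ℝ) : l2norm v = ‖WithLp.toLp 2 v‖ := by
  simp [l2norm, EuclideanSpace.norm_eq, sq_abs]

end l2norm

theorem l2norm_col_le_specNorm {m n : Type*} [Fintype m] [Fintype n] [DecidableEq n]
    (A : Matrix m n ℝ) (i : n) : l2norm (A.col i) ≤ specNorm A := by
  have h := (LinearMap.toContinuousLinearMap (Matrix.toEuclideanLin A)).le_opNorm
    (PiLp.single 2 i 1)
  rw [PiLp.norm_single, norm_one, mul_one] at h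
  simpa [l2norm_eq_norm_toLp, specNorm, ← PiLp.toLp_single, Matrix.toLpLin_toLp] using h

noncomputable def lassoObjective {m n : Type*} [Fintype m] [Fintype n]
    (A : Matrix m n ℝ) (d : m → ℝ) (w x : n → ℝ) : ℝ :=
  (1 / 2) * ∑ k, ((A *ᵥ x - d) k) ^ 2 + ∑ j, w j * |x j|

section lasso

variable {m n : Type*} [Fintype m] [Fintype n] {A : Matrix m n ℝ} {d : m → ℝ} {w xhat : n → ℝ}

theorem l2norm_residual_le_of_isMinOn (hw : 0 ≤ w)
    (hmin : IsMinOn (lassoObjective A d w) (Set.Ici 0) xhat) :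
    l2norm (A *ᵥ xhat - d) ≤ l2norm d := by
  have h0 := isMinOn_iff.1 hmin 0 Set.self_mem_Ici
  have hpen : 0 ≤ ∑ j, w j * |xhat j| :=
    Finset.sum_nonneg fun j _ => mul_nonneg (hw j) (abs_nonneg _)
  simp only [lassoObjective, mulVec_zero, zero_sub, Pi.neg_apply, neg_sq, Pi.zero_apply,
    abs_zero, mul_zero, Finset.sum_const_zero, add_zero] at h0
  exact Real.sqrt_le_sqrt (by linarith)

variable [DecidableEq n]

theorem sum_sq_mulVec_sub_single_sub (x : n → ℝ) (i : n) (t : ℝ) :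
    ∑ k, ((A *ᵥ (x - Pi.single i t) - d) k) ^ 2 =
      ∑ k, ((A *ᵥ x - d) k) ^ 2 - 2 * t * ∑ k, (A *ᵥ x - d) k * A k i +
        t ^ 2 * ∑ k, A k i ^ 2 := by
  simp only [Finset.mul_sum, ← Finset.sum_sub_distrib, ← Finset.sum_add_distrib]
  refine Finset.sum_congr rfl fun k _ => ?_
  simp only [mulVec_sub, mulVec_single, Pi.sub_apply, Pi.smul_apply, col_apply, op_smul_eq_mul]
  ring

theorem sum_mul_abs_sub_single {x : n → ℝ} {i : n} {t : ℝ} (hxi : 0 ≤ x i) (ht : t ≤ x i) :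
    ∑ j, w j * |(x - Pi.single i t : n → ℝ) j| = ∑ j, w j * |x j| - t * w i := by
  have hterm (j : n) :
      w j * |(x - Pi.single i t : n → ℝ) j| = w j * |x j| - (Pi.single i (t * w i) : n → ℝ) j := by
    rcases eq_or_ne j i with rfl | hj
    · simp only [Pi.sub_apply, Pi.single_eq_same, abs_of_nonneg hxi,
        abs_of_nonneg (sub_nonneg.2 ht)]
      ring
    · simp [hj]
  simp only [hterm, Finset.sum_sub_distrib, Finset.sum_pi_single', Finset.mem_univ, if_true]

theorem lassoObjective_sub_single {x : n → ℝ} {i : n} {t : ℝ} (hxi : 0 ≤ x i) (ht : t ≤ x i) :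
    lassoObjective A d w (x - Pi.single i t) =
      lassoObjective A d w x - t * (w i + ∑ k, (A *ᵥ x - d) k * A k i) +
        t ^ 2 / 2 * ∑ k, A k i ^ 2 := by
  rw [lassoObjective, lassoObjective, sum_sq_mulVec_sub_single_sub, sum_mul_abs_sub_single hxi ht]
  ring

theorem weight_add_sum_residual_mul_col_nonpos_of_isMinOn (hxhat : 0 ≤ xhat)
    (hmin : IsMinOn (lassoObjective A d w) (Set.Ici 0) xhat) {i : n} (hi : 0 < xhat i) :
    w i + ∑ k, (A *ᵥ xhat - d) k * A k i ≤ 0 := by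
  refine nonpos_of_forall_le_mul (q := (∑ k, A k i ^ 2) / 2) hi fun t ht hti => ?_
  have hmem : xhat - Pi.single i t ∈ Set.Ici 0 := by
    intro j
    rcases eq_or_ne j i with rfl | hj
    · simpa using hti
    · simpa [hj] using hxhat j
  have h := isMinOn_iff.1 hmin _ hmem
  rw [lassoObjective_sub_single (hxhat i) hti] at h
  refine le_of_mul_le_mul_left ?_ ht
  linarith

end lasso

theorem large_weight_forces_zero (M N : ℕ) (A : Matrix (Fin M) (Fin N) ℝ)
    (d : Fin M → ℝ) (w : Fin N → ℝ) (hw : ∀ i, 0 ≤ w i)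
    (xhat : Fin N → ℝ) (hxhat : ∀ j, 0 ≤ xhat j)
    (hmin : ∀ x : Fin N → ℝ, (∀ j, 0 ≤ x j) →
      (1 / 2) * (∑ i, ((A.mulVec xhat - d) i) ^ 2) + (∑ i, w i * |xhat i|) ≤
      (1 / 2) * (∑ i, ((A.mulVec x - d) i) ^ 2) + (∑ i, w i * |x i|))
    (i : Fin N) (hwi : specNorm A * l2norm d < w i) :
    xhat i = 0 := by
  have hmin' : IsMinOn (lassoObjective A d w) (Set.Ici 0) xhat :=
    isMinOn_iff.2 fun x hx => hmin x hx
  refine le_antisymm (not_lt.1 fun hi => hwi.not_ge ?_) (hxhat i)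
  have hstat := weight_add_sum_residual_mul_col_nonpos_of_isMinOn hxhat hmin' hi
  have hcs := sum_mul_le_l2norm_mul_l2norm (-(A *ᵥ xhat - d)) (A.col i)
  simp only [Pi.neg_apply, neg_mul, Finset.sum_neg_distrib, col_apply, l2norm_neg] at hcs
  calc w i ≤ l2norm (A *ᵥ xhat - d) * l2norm (A.col i) := by linarith
    _ ≤ l2norm d * specNorm A :=
      mul_le_mul (l2norm_residual_le_of_isMinOn hw hmin') (l2norm_col_le_specNorm A i)
        (Real.sqrt_nonneg _) (Real.sqrt_nonneg _)
    _ = specNorm A * l2norm d := mul_comm _ _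
end
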